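/- arXiv:1908.03113 — 3 statements merged into one kernel-verified Lean document; each statement's English description precedes it below -/
import Mathlib

section
/- For any z on the unit circle, any complex number a with |a| ≥ 1, and any real r with 0 < r < 1, one has |z - a| ≤ 2|rz - a|. -/
/-! Pass through `r • z`: the step from `z` costs `‖z - r • z‖ = 1 - r`, and since `‖a‖ ≥ 1` the
reverse triangle inequality gives `1 - r ≤ ‖a‖ - ‖r • z‖ ≤ ‖r • z - a‖`. -/

theorem norm_sub_le_two_mul_norm_smul_sub {E : Type*} [SeminormedAddCommGroup E]
    [NormedSpace ℝ E] {z a : E} (hz : ‖z‖ = 1) (ha : 1 ≤ ‖a‖) {r : ℝ} (hr0 : 0 ≤ r)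
    (hr1 : r ≤ 1) : ‖z - a‖ ≤ 2 * ‖r • z - a‖ := by
  have hrz : ‖r • z‖ = r := by rw [norm_smul, hz, mul_one, Real.norm_of_nonneg hr0]
  have hstep : ‖z - r • z‖ = 1 - r := by
    rw [show z - r • z = (1 - r) • z by rw [sub_smul, one_smul], norm_smul, hz, mul_one,
      Real.norm_of_nonneg (sub_nonneg.2 hr1)]
  have hlower : 1 - r ≤ ‖r • z - a‖ := by
    have hrev := norm_sub_norm_le a (r • z)
    rw [hrz, norm_sub_rev] at hrev
    linarith
  calc ‖z - a‖ ≤ ‖z - r • z‖ + ‖r • z - a‖ := norm_sub_le_norm_sub_add_norm_sub _ _ _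
    _ ≤ 2 * ‖r • z - a‖ := by linarith

theorem stmt0 (z a : ℂ) (hz : ‖z‖ = 1) (ha : 1 ≤ ‖a‖) (r : ℝ)
    (hr0 : 0 < r) (hr1 : r < 1) :
    ‖z - a‖ ≤ 2 * ‖(r : ℂ) * z - a‖ := by
  simpa only [Complex.real_smul] using
    norm_sub_le_two_mul_norm_smul_sub hz ha hr0.le hr1.le
end

section
/- A nonzero square-summable sequence (a_n)_{n≥1} of complex numbers is totally multiplicative (i.e., a_{mn} = a_m a_n for all m, n ≥ 1) if and only if there exists a sequence (λ_k)_{k≥1} of complex numbers with ∑_k |λ_k|² < ∞ and each |λ_k| < 1, such that a_n = ∏_k λ_k^{ν_{p_k}(n)} for every n ≥ 1, where ν_{p_k}(n) is the exponent of the k-th prime p_k in the factorization of n. -/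
/-!
If `a` is totally multiplicative then it is determined by its values at the primes,
`a n = ∏ p ^ e ∥ n, a p ^ e`, so `λ k := a p_k` works: restricting `∑ ‖a n‖²` to the powers
of `p` gives the geometric series `∑ (‖a p‖²)ʲ`, whose convergence forces `‖a p‖ < 1`.
Conversely, `n ↦ ∏ λ_k ^ ν_{p_k}(n)` is multiplicative because `ν_p(mn) = ν_p(m) + ν_p(n)`.
-/

open Function

def TotallyMultiplicative {M : Type*} [Mul M] (a : ℕ → M) : Prop :=
  ∀ m n : ℕ, 0 < m → 0 < n → a (m * n) = a m * a n

namespace TotallyMultiplicative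

variable {M : Type*} {a : ℕ → M}

theorem map_one [MonoidWithZero M] [IsLeftCancelMulZero M] (ha : TotallyMultiplicative a)
    {n : ℕ} (hn : 0 < n) (hn₀ : a n ≠ 0) : a 1 = 1 := by
  refine (mul_left_cancel₀ hn₀ ?_).symm
  rw [← ha n 1 hn one_pos, mul_one, mul_one]

theorem map_pow [Monoid M] (ha : TotallyMultiplicative a) (h1 : a 1 = 1) {p : ℕ} (hp : 0 < p)
    (e : ℕ) : a (p ^ e) = a p ^ e := by
  induction e with
  | zero => simpa using h1
  | succ e ih => rw [pow_succ, pow_succ, ha _ _ (pow_pos hp e) hp, ih]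

theorem map_prod [CommMonoid M] (ha : TotallyMultiplicative a) (h1 : a 1 = 1) {ι : Type*}
    (s : Finset ι) (f : ι → ℕ) (hf : ∀ i ∈ s, 0 < f i) : a (∏ i ∈ s, f i) = ∏ i ∈ s, a (f i) := by
  classical
  induction s using Finset.induction with
  | empty => simpa using h1
  | insert i s hi ih =>
    rw [Finset.forall_mem_insert] at hf
    rw [Finset.prod_insert hi, Finset.prod_insert hi,
      ha _ _ hf.1 (Finset.prod_pos hf.2), ih hf.2]

theorem eq_factorization_prod [CommMonoid M] (ha : TotallyMultiplicative a) (h1 : a 1 = 1)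
    {n : ℕ} (hn : n ≠ 0) : a n = n.factorization.prod fun p e => a p ^ e := by
  conv_lhs => rw [← Nat.prod_factorization_pow_eq_self hn]
  have hpos : ∀ p ∈ n.factorization.support, 0 < p :=
    fun p hp => (Nat.prime_of_mem_primeFactors hp).pos
  rw [Finsupp.prod, Finsupp.prod, ha.map_prod h1 _ _ fun p hp => pow_pos (hpos p hp) _]
  exact Finset.prod_congr rfl fun p hp => ha.map_pow h1 (hpos p hp) _

theorem norm_lt_one [NormedDivisionRing M] (ha : TotallyMultiplicative a) (h1 : a 1 = 1)
    (hsum : Summable fun n => ‖a n‖ ^ 2) {p : ℕ} (hp : 2 ≤ p) : ‖a p‖ < 1 := by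
  have hgeom : Summable fun j : ℕ => (‖a p‖ ^ 2) ^ j := by
    refine (hsum.comp_injective (Nat.pow_right_injective hp)).congr fun j => ?_
    rw [comp_apply, ha.map_pow h1 (by omega), norm_pow, ← pow_mul, ← pow_mul, mul_comm]
  rw [summable_geometric_iff_norm_lt_one, Real.norm_of_nonneg (by positivity)] at hgeom
  exact (sq_lt_one_iff₀ (norm_nonneg _)).1 hgeom

end TotallyMultiplicative

namespace Nat

variable {M : Type*} [CommMonoid M]

theorem finprod_pow_factorization_nth_prime (b : ℕ → M) (n : ℕ) :
    ∏ᶠ k, b (nth Prime k) ^ n.factorization (nth Prime k) =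
      n.factorization.prod fun p e => b p ^ e := by
  rw [← finprod_mem_range (f := fun p => b p ^ n.factorization p)
    (nth_injective infinite_setOfPred_prime)]
  refine finprod_mem_eq_prod_of_subset _ (fun p hp => ?_) fun p hp => ?_
  · rw [Finset.mem_coe, Finsupp.mem_support_iff]
    intro h
    simp [h] at hp
  · rw [range_nth_of_infinite infinite_setOfPred_prime]
    exact prime_of_mem_primeFactors hp

theorem factorization_prod_pow_mul (b : ℕ → M) {m n : ℕ} (hm : m ≠ 0) (hn : n ≠ 0) :
    ((m * n).factorization.prod fun p e => b p ^ e) =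
      (m.factorization.prod fun p e => b p ^ e) * n.factorization.prod fun p e => b p ^ e := by
  rw [factorization_mul hm hn, Finsupp.prod_add_index' (fun _ => pow_zero _) fun _ => pow_add _]

end Nat

/-- A nonzero square-summable sequence is totally multiplicative iff it is of the
form `a n = ∏ k, λ k ^ ν_{p_k}(n)` for a square-summable sequence `λ` with `|λ k| < 1`,
where `p_k = Nat.nth Nat.Prime k` is the `k`-th prime. -/
theorem stmt1 (a : ℕ → ℂ) (ha : ∃ n, 0 < n ∧ a n ≠ 0)
    (hsum : Summable fun n => ‖a n‖ ^ 2) :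
    (∀ m n : ℕ, 0 < m → 0 < n → a (m * n) = a m * a n) ↔
      ∃ lam : ℕ → ℂ, (Summable fun k => ‖lam k‖ ^ 2) ∧ (∀ k, ‖lam k‖ < 1) ∧
        ∀ n : ℕ, 0 < n →
          a n = ∏ᶠ k : ℕ, lam k ^ (n.factorization (Nat.nth Nat.Prime k)) := by
  constructor
  · intro (hmul : TotallyMultiplicative a)
    obtain ⟨n₀, hn₀, hne₀⟩ := ha
    have h1 : a 1 = 1 := hmul.map_one hn₀ hne₀
    refine ⟨fun k => a (Nat.nth Nat.Prime k),
      hsum.comp_injective (Nat.nth_injective Nat.infinite_setOfPred_prime),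
      fun k => hmul.norm_lt_one h1 hsum (Nat.prime_nth_prime k).two_le,
      fun n hn => ?_⟩
    rw [Nat.finprod_pow_factorization_nth_prime a n,
      hmul.eq_factorization_prod h1 hn.ne']
  · rintro ⟨lam, -, -, hrep⟩ m n hm hn
    have hprod : ∀ n, 0 < n →
        a n = n.factorization.prod fun p e => lam (Nat.count Nat.Prime p) ^ e := fun n hn => by
      rw [hrep n hn, ← Nat.finprod_pow_factorization_nth_prime]
      simp only [Nat.count_nth_of_infinite Nat.infinite_setOfPred_prime]
    rw [hprod _ (mul_pos hm hn), hprod m hm, hprod n hn,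
      Nat.factorization_prod_pow_mul _ hm.ne' hn.ne']
end

section
/- Let 𝒫₁, 𝒫₂, … be a partition of the set of primes, and for each k let 𝒩_k be the multiplicative subsemigroup of ℕ generated by 𝒫_k ∪ {1}. If an absolutely summable sequence (a_n)_{n≥1} of complex numbers satisfies a_{mn} = a_m a_n whenever for each k at least one of m, n has no prime factor in 𝒫_k, then ∑_{n=1}^∞ a_n = ∏_{k=1}^∞ (∑_{m ∈ 𝒩_k} a_m). -/
/-!
Write `factoredIn S` for the positive integers all of whose prime factors lie in `S`. For disjoint
`S` and `T`, multiplication is a bijection `factoredIn S × factoredIn T ≃ factoredIn (S ∪ T)`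
along which a `Δ`-multiplicative sequence is multiplicative, so the Cauchy product of absolutely
convergent series turns `∏ k ∈ F, ∑_{𝒩_k} a` into the sum of `a` over `factoredIn (⋃ k ∈ F, P k)`.
These sets eventually contain each positive integer, and dominated convergence for series gives
the limit.
-/

open Filter Function Topology

theorem tendsto_tsum_subtype_of_eventually_mem {α β E : Type*} [NormedAddCommGroup E]
    [CompleteSpace E] {l : Filter α} {f : β → E} (hf : Summable (‖f ·‖)) {s : α → Set β}
    (hs : ∀ b, f b ≠ 0 → ∀ᶠ i in l, b ∈ s i) :
    Tendsto (fun i => ∑' b : s i, f b) l (𝓝 (∑' b, f b)) := by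
  simp_rw [tsum_subtype]
  refine tendsto_tsum_of_dominated_convergence hf (fun b => ?_)
    (.of_forall fun i b => norm_indicator_le_norm_self _ _)
  by_cases hb : f b = 0
  · simpa only [hb, Set.indicator_apply_eq_zero.2 fun _ => hb] using tendsto_const_nhds
  · exact tendsto_const_nhds.congr' ((hs b hb).mono fun i hi => (Set.indicator_of_mem hi f).symm)

namespace Nat

/-- `factoredIn (P k)` is the semigroup `𝒩_k`; unlike `Nat.factoredNumbers`, `S` may be infinite. -/
def factoredIn (S : Set ℕ) : Set ℕ := {n | 0 < n ∧ ∀ p, p.Prime → p ∣ n → p ∈ S}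

section factoredIn

variable {S T : Set ℕ} {m n : ℕ}

lemma mul_mem_factoredIn_union (hm : m ∈ factoredIn S) (hn : n ∈ factoredIn T) :
    m * n ∈ factoredIn (S ∪ T) :=
  ⟨Nat.mul_pos hm.1 hn.1, fun p hp hpmn =>
    (hp.dvd_mul.1 hpmn).imp (hm.2 p hp) (hn.2 p hp)⟩

lemma coprime_of_mem_factoredIn (hST : Disjoint S T) (hm : m ∈ factoredIn S)
    (hn : n ∈ factoredIn T) : m.Coprime n :=
  coprime_of_dvd fun p hp hpm hpn => Set.disjoint_left.1 hST (hm.2 p hp hpm) (hn.2 p hp hpn)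

lemma not_dvd_of_mem_factoredIn {A : Set ℕ} (hA : ∀ p ∈ A, p.Prime) (hAS : Disjoint A S)
    (hm : m ∈ factoredIn S) : ∀ p ∈ A, ¬ p ∣ m :=
  fun p hpA hpm => Set.disjoint_left.1 hAS hpA (hm.2 p (hA p hpA) hpm)

lemma prod_pow_mem_factoredIn {f : ℕ →₀ ℕ} (hf : ∀ p ∈ f.support, p.Prime)
    (hS : ∀ p ∈ f.support, p ∈ S) : f.prod (· ^ ·) ∈ factoredIn S := by
  have hne : f.prod (· ^ ·) ≠ 0 :=
    Finsupp.prod_ne_zero_iff.2 fun p hp => pow_ne_zero _ (hf p hp).ne_zero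
  refine ⟨pos_of_ne_zero hne, fun p hp hpf => hS p ?_⟩
  rw [← prod_pow_factorization_eq_self hf, support_factorization]
  exact mem_primeFactors.2 ⟨hp, hpf, hne⟩

lemma exists_factoredIn_mul_factoredIn_compl_eq (S : Set ℕ) (hn : n ≠ 0) :
    ∃ m ∈ factoredIn S, ∃ k ∈ factoredIn Sᶜ, m * k = n := by
  classical
  have hmem (q : ℕ → Prop) [DecidablePred q] :
      (n.factorization.filter q).prod (· ^ ·) ∈ factoredIn {p | q p} := by
    refine prod_pow_mem_factoredIn (fun p hp => ?_) fun p hp => ?_ <;>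
      rw [Finsupp.support_filter, Finset.mem_filter] at hp
    exacts [prime_of_mem_primeFactors hp.1, hp.2]
  exact ⟨_, hmem (· ∈ S), _, hmem (· ∉ S), by
    rw [Finsupp.prod_filter_mul_prod_filter_not, prod_factorization_pow_eq_self hn]⟩

lemma eq_and_eq_of_mul_eq_mul_of_mem_factoredIn (hST : Disjoint S T) {m₁ n₁ m₂ n₂ : ℕ}
    (hm₁ : m₁ ∈ factoredIn S) (hn₁ : n₁ ∈ factoredIn T) (hm₂ : m₂ ∈ factoredIn S)
    (hn₂ : n₂ ∈ factoredIn T) (h : m₁ * n₁ = m₂ * n₂) : m₁ = m₂ ∧ n₁ = n₂ := by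
  have hm : m₁ = m₂ := dvd_antisymm
    ((coprime_of_mem_factoredIn hST hm₁ hn₂).dvd_of_dvd_mul_right ⟨n₁, h.symm⟩)
    ((coprime_of_mem_factoredIn hST hm₂ hn₁).dvd_of_dvd_mul_right ⟨n₂, h⟩)
  subst hm
  exact ⟨rfl, Nat.eq_of_mul_eq_mul_left hm₁.1 h⟩

noncomputable def factoredInProdEquiv (hST : Disjoint S T) :
    factoredIn S × factoredIn T ≃ factoredIn (S ∪ T) :=
  Equiv.ofBijective (fun z => ⟨z.1 * z.2, mul_mem_factoredIn_union z.1.2 z.2.2⟩) <| by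
    refine ⟨fun z w h => ?_, fun ⟨n, hn⟩ => ?_⟩
    · obtain ⟨h₁, h₂⟩ := eq_and_eq_of_mul_eq_mul_of_mem_factoredIn hST z.1.2 z.2.2 w.1.2 w.2.2
        (congrArg Subtype.val h)
      exact Prod.ext (Subtype.ext h₁) (Subtype.ext h₂)
    · obtain ⟨m, hm, k, hk, rfl⟩ := exists_factoredIn_mul_factoredIn_compl_eq S hn.1.ne'
      have hkT : k ∈ factoredIn T := ⟨hk.1, fun p hp hpk =>
        (hn.2 p hp (dvd_mul_of_dvd_right hpk m)).resolve_left (hk.2 p hp hpk)⟩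
      exact ⟨(⟨m, hm⟩, ⟨k, hkT⟩), rfl⟩

theorem tsum_factoredIn_union {R : Type*} [NormedRing R] [CompleteSpace R] (hST : Disjoint S T)
    {a : ℕ → R} (ha : Summable (‖a ·‖))
    (hmul : ∀ m ∈ factoredIn S, ∀ n ∈ factoredIn T, a (m * n) = a m * a n) :
    ∑' n : factoredIn (S ∪ T), a n = (∑' m : factoredIn S, a m) * ∑' n : factoredIn T, a n := by
  rw [tsum_mul_tsum_of_summable_norm (ha.subtype _) (ha.subtype _),
    ← (factoredInProdEquiv hST).tsum_eq]
  exact tsum_congr fun z => hmul _ z.1.2 _ z.2.2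

end factoredIn

section partition

variable {ι : Type*} {P : ι → Set ℕ}

theorem prod_tsum_factoredIn {R : Type*} [NormedCommRing R] [CompleteSpace R]
    (hprime : ∀ k, ∀ p ∈ P k, p.Prime) (hdisj : Pairwise (Disjoint on P))
    {a : ℕ → R} (ha : Summable (‖a ·‖))
    (hmul : ∀ m n : ℕ, 0 < m → 0 < n →
      (∀ k, (∀ p ∈ P k, ¬ p ∣ m) ∨ (∀ p ∈ P k, ¬ p ∣ n)) → a (m * n) = a m * a n)
    {F : Finset ι} (hF : F.Nonempty) :
    ∏ k ∈ F, ∑' m : factoredIn (P k), a m = ∑' n : factoredIn (⋃ k ∈ F, P k), a n := by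
  classical
  induction hF using Finset.Nonempty.cons_induction with
  | singleton k => rw [Finset.prod_singleton, Finset.set_biUnion_singleton]
  | cons k F hk _ ih =>
    have hkF : Disjoint (P k) (⋃ l ∈ F, P l) :=
      Set.disjoint_iUnion₂_right.2 fun l hl => hdisj fun hkl => hk (hkl ▸ hl)
    rw [Finset.prod_cons, ih, Finset.cons_eq_insert, Finset.set_biUnion_insert,
      tsum_factoredIn_union hkF ha]
    refine fun m hm n hn => hmul m n hm.1 hn.1 fun l => ?_
    rcases eq_or_ne l k with rfl | hlk
    · exact .inr (not_dvd_of_mem_factoredIn (hprime l) hkF hn)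
    · exact .inl (not_dvd_of_mem_factoredIn (hprime l) (hdisj hlk) hm)

lemma eventually_mem_factoredIn_biUnion (hcover : ∀ p, p.Prime → ∃ k, p ∈ P k) {n : ℕ}
    (hn : n ≠ 0) : ∀ᶠ F : Finset ι in atTop, n ∈ factoredIn (⋃ k ∈ F, P k) := by
  have hp : ∀ p ∈ n.primeFactors, ∀ᶠ F : Finset ι in atTop, p ∈ ⋃ k ∈ F, P k := fun p hp =>
    have ⟨k, hk⟩ := hcover p (prime_of_mem_primeFactors hp)
    (eventually_ge_atTop {k}).mono fun F hF =>
      Set.mem_biUnion (hF (Finset.mem_singleton_self k)) hk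
  filter_upwards [(eventually_all_finset _).2 hp] with F hF
  exact ⟨pos_of_ne_zero hn, fun p hp hpn => hF p (mem_primeFactors.2 ⟨hp, hpn, hn⟩)⟩

end partition

end Nat

open Nat

/-- For a partition `P` of the primes and a `Δ`-multiplicative absolutely summable
sequence, the sum factors as the product over `k` of the sums over the semigroup
`𝒩_k` generated by `P k ∪ {1}`. -/
theorem stmt5 (P : ℕ → Set ℕ)
    (hprime : ∀ k, ∀ p ∈ P k, Nat.Prime p)
    (hdisj : ∀ k l, k ≠ l → Disjoint (P k) (P l))
    (hcover : ∀ p : ℕ, Nat.Prime p → ∃ k, p ∈ P k)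
    (a : ℕ → ℂ) (h0 : a 0 = 0) (hsum : Summable fun n => ‖a n‖)
    (hmul : ∀ m n : ℕ, 0 < m → 0 < n →
      (∀ k, (∀ p ∈ P k, ¬ p ∣ m) ∨ (∀ p ∈ P k, ¬ p ∣ n)) →
      a (m * n) = a m * a n) :
    ∑' n : ℕ, a n =
      ∏' k : ℕ, ∑' m : {n : ℕ // 0 < n ∧ ∀ p : ℕ, Nat.Prime p → p ∣ n → p ∈ P k},
        a m.1 := by
  refine (HasProd.tprod_eq ?_).symm
  have hlim := tendsto_tsum_subtype_of_eventually_mem hsum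
    (s := fun F : Finset ℕ => factoredIn (⋃ k ∈ F, P k)) fun n hn =>
      eventually_mem_factoredIn_biUnion hcover (by rintro rfl; exact hn h0)
  refine hlim.congr' ?_
  -- `F ⊇ {0}` keeps `F` nonempty: at `F = ∅` the identity would read `1 = a 1`.
  filter_upwards [eventually_ge_atTop {0}] with F hF
  exact (prod_tsum_factoredIn hprime hdisj hsum hmul ⟨0, hF (Finset.mem_singleton_self 0)⟩).symm
end
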